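/- arXiv:1803.00294 — 4 statements merged into one kernel-verified Lean document; each statement's English description precedes it below -/
import Mathlib

section
/- Let G be a finitely generated group, H a subgroup of Aut(G), and H₀ a finite-index subgroup of H. Suppose S ⊆ G is a finite set such that the orbit H·S generates G. Then the word norm on G with respect to H·S and the word norm with respect to H₀·S' (for a suitable finite set S' with H₀·S' = H·S) are bi-Lipschitz equivalent. -/
/-- The word norm of `x` with respect to the generating set `S`. -/
noncomputable def wordNorm {G : Type*} [Group G] (S : Set G) (x : G) : ℕ :=
  sInf {n | ∃ l : List G, (∀ s ∈ l, s ∈ S) ∧ l.length = n ∧ l.prod = x}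

/-- The orbit `H·S` of a set `S ⊆ G` under a subgroup `H ≤ Aut(G)`. -/
def autOrbit {G : Type*} [Group G] (H : Subgroup (MulAut G)) (S : Set G) : Set G :=
  {g | ∃ ψ ∈ H, ∃ s ∈ S, ψ s = g}

theorem stmt0 {G : Type*} [Group G] (hfg : Group.FG G)
    (H H₀ : Subgroup (MulAut G)) (hle : H₀ ≤ H)
    (hfi : (H₀.subgroupOf H).FiniteIndex)
    (S : Set G) (hSfin : S.Finite)
    (hgen : Subgroup.closure (autOrbit H S) = ⊤) :
    ∃ S' : Set G, S'.Finite ∧ autOrbit H₀ S' = autOrbit H S ∧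
      ∃ C : ℝ, 0 < C ∧ ∀ x : G,
        C⁻¹ * (wordNorm (autOrbit H₀ S') x : ℝ) ≤ (wordNorm (autOrbit H S) x : ℝ) ∧
        (wordNorm (autOrbit H S) x : ℝ) ≤ C * (wordNorm (autOrbit H₀ S') x : ℝ) := by
  classical
  haveI := hfi
  haveI : Finite (H ⧸ H₀.subgroupOf H) :=
    Subgroup.finite_quotient_of_finiteIndex
  set K := H₀.subgroupOf H with hK
  set S' : Set G :=
    Set.image2 (fun (q : H ⧸ K) s => ((q.out : H) : MulAut G)⁻¹ s) Set.univ S with hS'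
  have hEq : autOrbit H₀ S' = autOrbit H S := by
    ext g
    constructor
    · rintro ⟨φ, hφ, s', ⟨q, -, s, hs, rfl⟩, rfl⟩
      refine ⟨φ * ((q.out : H) : MulAut G)⁻¹, ?_, s, hs, rfl⟩
      exact H.mul_mem (hle hφ) (H.inv_mem (q.out : H).2)
    · rintro ⟨ψ, hψ, s, hs, rfl⟩
      set ψ' : H := ⟨ψ, hψ⟩
      set q : H ⧸ K := QuotientGroup.mk ψ'⁻¹
      have hq : QuotientGroup.mk q.out = q := QuotientGroup.out_eq' q
      have hmem : ψ' * q.out ∈ K := by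
        have := (QuotientGroup.eq (s := K) (a := ψ'⁻¹) (b := q.out)).mp hq.symm
        simpa using this
      refine ⟨ψ * ((q.out : H) : MulAut G), hmem, _, ⟨q, Set.mem_univ _, s, hs, rfl⟩, ?_⟩
      simp
  refine ⟨S', Set.Finite.image2 _ Set.finite_univ hSfin, hEq, 1, one_pos, fun x => ?_⟩
  rw [hEq]
  constructor <;> simp
end

section
/- For n ≥ 2, every element of ℤⁿ is a sum of at most 2 elements whose coordinate entries are coprime. In particular, for n = 2, every (m, k) ∈ ℤ² can be written as a sum of two vectors each with coprime coordinates, so the word norm on ℤ² with respect to the set of primitive vectors (GL₂(ℤ)-orbit of (1,0)) is bounded by 2. -/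
/-- The word norm in an additive group with respect to the set `S`. -/
noncomputable def addWordNorm {A : Type*} [AddGroup A] (S : Set A) (x : A) : ℕ :=
  sInf {n | ∃ l : List A, (∀ s ∈ l, s ∈ S) ∧ l.length = n ∧ l.sum = x}

/-! Subtract from `v` a vector `w` with entry `1` at `i` and entry `v j - 1` at `j ≠ i`: the
difference has entry `1` at `j`, so both summands contain a unit entry and are primitive. -/

theorem Finset.gcd_eq_one_of_apply_eq_one {α β : Type*} [CommMonoidWithZero α]
    [NormalizedGCDMonoid α] {s : Finset β} {f : β → α} {i : β} (hi : i ∈ s) (hfi : f i = 1) :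
    s.gcd f = 1 := by
  rw [← Finset.normalize_gcd, normalize_eq_one]
  exact isUnit_of_dvd_one (hfi ▸ Finset.gcd_dvd hi)

theorem Pi.exists_apply_eq_one_add_eq {ι R : Type*} [DecidableEq ι] [Ring R] {i j : ι}
    (hij : i ≠ j) (v : ι → R) :
    ∃ u w : ι → R, u j = 1 ∧ w i = 1 ∧ u + w = v := by
  set w : ι → R := Pi.single i 1 + Pi.single j (v j - 1)
  exact ⟨v - w, w, by simp [w, hij], by simp [w, hij], sub_add_cancel v w⟩

theorem Prod.exists_isCoprime_add_eq {R : Type*} [CommRing R] (v : R × R) :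
    ∃ u w : R × R, IsCoprime u.1 u.2 ∧ IsCoprime w.1 w.2 ∧ u + w = v :=
  ⟨(v.1 - 1, 1), (1, v.2 - 1), isCoprime_one_right, isCoprime_one_left, by
    ext <;> simp⟩

theorem addWordNorm_sum_le_length {A : Type*} [AddGroup A] {S : Set A} {l : List A}
    (hl : ∀ s ∈ l, s ∈ S) : addWordNorm S l.sum ≤ l.length :=
  Nat.sInf_le ⟨l, hl, rfl, rfl⟩

theorem addWordNorm_add_le_two {A : Type*} [AddGroup A] {S : Set A} {u w : A}
    (hu : u ∈ S) (hw : w ∈ S) : addWordNorm S (u + w) ≤ 2 := by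
  simpa using addWordNorm_sum_le_length (S := S) (l := [u, w]) (by simp [hu, hw])

theorem stmt8 :
    (∀ n : ℕ, 2 ≤ n → ∀ v : Fin n → ℤ, ∃ u w : Fin n → ℤ,
      Finset.univ.gcd u = 1 ∧ Finset.univ.gcd w = 1 ∧ u + w = v) ∧
    (∀ v : ℤ × ℤ, ∃ u w : ℤ × ℤ,
      IsCoprime u.1 u.2 ∧ IsCoprime w.1 w.2 ∧ u + w = v) ∧
    (∀ v : ℤ × ℤ, addWordNorm {u : ℤ × ℤ | IsCoprime u.1 u.2} v ≤ 2) := by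
  refine ⟨fun n hn v => ?_, Prod.exists_isCoprime_add_eq, fun v => ?_⟩
  · have h01 : (⟨0, by omega⟩ : Fin n) ≠ ⟨1, by omega⟩ := by simp [Fin.ext_iff]
    obtain ⟨u, w, hu, hw, rfl⟩ := Pi.exists_apply_eq_one_add_eq h01 v
    exact ⟨u, w, Finset.gcd_eq_one_of_apply_eq_one (Finset.mem_univ _) hu,
      Finset.gcd_eq_one_of_apply_eq_one (Finset.mem_univ _) hw, rfl⟩
  · obtain ⟨u, w, hu, hw, rfl⟩ := Prod.exists_isCoprime_add_eq v
    exact addWordNorm_add_le_two hu hw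
end

section
/- Let W be a graph product of cyclic groups over a finite graph Γ and X ⊆ V a subset of vertices. The kernel K_X of the standard retraction R_X : W → W_X is invariant under every factor automorphism and every partial conjugation of W. -/
open scoped commutatorElement

/-- Relations of the graph product of cyclic groups: `v ^ (o v)` for each vertex
(`o v = 0` meaning infinite cyclic) and commutators along edges. -/
def gpRels (V : Type*) (Γ : SimpleGraph V) (o : V → ℕ) : Set (FreeGroup V) :=
  {r | (∃ v : V, r = FreeGroup.of v ^ o v) ∨
       (∃ v w : V, Γ.Adj v w ∧ r = ⁅FreeGroup.of v, FreeGroup.of w⁆)}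

/-- The graph product of cyclic groups of orders `o v` (0 = infinite) over `Γ`. -/
abbrev GP (V : Type*) (Γ : SimpleGraph V) (o : V → ℕ) := PresentedGroup (gpRels V Γ o)

/-- The generator of `GP V Γ o` corresponding to the vertex `v`. -/
def gpGen {V : Type*} {Γ : SimpleGraph V} {o : V → ℕ} (v : V) : GP V Γ o :=
  PresentedGroup.of v

/-- `ψ` acts like a factor automorphism: it sends one generator `v` to a power of
itself and fixes all other generators. -/
def IsFactorAuto {V : Type*} {Γ : SimpleGraph V} {o : V → ℕ} (ψ : GP V Γ o ≃* GP V Γ o) : Prop :=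
  ∃ (v : V) (m : ℤ), ψ (gpGen v) = gpGen v ^ m ∧ ∀ z : V, z ≠ v → ψ (gpGen z) = gpGen z

/-- `ψ` acts like a partial conjugation: for some vertex `v` and some set `K` of
vertices outside the star of `v`, it conjugates the generators in `K` by `v` and fixes
all other generators. -/
def IsPartialConj {V : Type*} {Γ : SimpleGraph V} {o : V → ℕ} (ψ : GP V Γ o ≃* GP V Γ o) : Prop :=
  ∃ (v : V) (K : Set V),
    (∀ z ∈ K, z ≠ v ∧ ¬Γ.Adj v z) ∧
    (∀ z ∈ K, ψ (gpGen z) = gpGen v * gpGen z * (gpGen v)⁻¹) ∧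
    (∀ z : V, z ∉ K → ψ (gpGen z) = gpGen z)

lemma gpGen_pow {V : Type*} {Γ : SimpleGraph V} {o : V → ℕ} (v : V) :
    (gpGen v : GP V Γ o) ^ o v = 1 := by
  have : (gpGen v : GP V Γ o) ^ o v =
      PresentedGroup.mk (gpRels V Γ o) (FreeGroup.of v ^ o v) := by
    simp [gpGen, PresentedGroup.of, map_pow]
  rw [this]
  have hmem : FreeGroup.of v ^ o v ∈ Subgroup.normalClosure (gpRels V Γ o) :=
    Subgroup.subset_normalClosure (Or.inl ⟨v, rfl⟩)
  exact (QuotientGroup.eq_one_iff _).mpr hmem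

lemma gpGen_comm {V : Type*} {Γ : SimpleGraph V} {o : V → ℕ} {v w : V} (h : Γ.Adj v w) :
    ⁅(gpGen v : GP V Γ o), (gpGen w : GP V Γ o)⁆ = 1 := by
  have : ⁅(gpGen v : GP V Γ o), (gpGen w : GP V Γ o)⁆ =
      PresentedGroup.mk (gpRels V Γ o) ⁅FreeGroup.of v, FreeGroup.of w⁆ := by
    simp [gpGen, PresentedGroup.of, commutatorElement_def]
  rw [this]
  have hmem : ⁅FreeGroup.of v, FreeGroup.of w⁆ ∈ Subgroup.normalClosure (gpRels V Γ o) :=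
    Subgroup.subset_normalClosure (Or.inr ⟨v, w, h, rfl⟩)
  exact (QuotientGroup.eq_one_iff _).mpr hmem

theorem stmt14 (V : Type*) [Fintype V] (Γ : SimpleGraph V) (o : V → ℕ) (X : Set V)
    (R : GP V Γ o →* GP X (Γ.induce X) (fun v => o v))
    (hR1 : ∀ v : X, R (gpGen (v : V)) = gpGen v)
    (hR2 : ∀ v : V, v ∉ X → R (gpGen v) = 1)
    (ψ : GP V Γ o ≃* GP V Γ o)
    (hψ : IsFactorAuto ψ ∨ IsPartialConj ψ) :
    ∀ x : GP V Γ o, R x = 1 → R (ψ x) = 1 := by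
  classical
  -- The set of killed generators and its normal closure
  set A : Set (GP V Γ o) := {x | ∃ z : V, z ∉ X ∧ x = gpGen z} with hA
  set N : Subgroup (GP V Γ o) := Subgroup.normalClosure A with hN
  -- Step 1: R (ψ (gpGen z)) = 1 for z ∉ X
  have hstep1 : ∀ z : V, z ∉ X → R (ψ (gpGen z)) = 1 := by
    intro z hz
    rcases hψ with ⟨v, m, hv, hother⟩ | ⟨v, K, _, hK, hfix⟩
    · by_cases hzv : z = v
      · subst hzv
        rw [hv, map_zpow, hR2 z hz, one_zpow]
      · rw [hother z hzv, hR2 z hz]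
    · by_cases hzK : z ∈ K
      · rw [hK z hzK, map_mul, map_mul, map_inv, hR2 z hz]
        group
      · rw [hfix z hzK, hR2 z hz]
  -- Step 2: the section ι' : GP X → GP V ⧸ N
  have hNnormal : N.Normal := Subgroup.normalClosure_normal
  let π : GP V Γ o →* GP V Γ o ⧸ N := QuotientGroup.mk' N
  have hrels : ∀ r ∈ gpRels X (Γ.induce X) (fun v => o v),
      FreeGroup.lift (fun z : X => π (gpGen (z : V))) r = 1 := by
    intro r hr
    rcases hr with ⟨v, rfl⟩ | ⟨v, w, hadj, rfl⟩
    · rw [map_pow, FreeGroup.lift_apply_of, ← map_pow, gpGen_pow, map_one]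
    · have hadj' : Γ.Adj (v : V) (w : V) := hadj
      rw [commutatorElement_def, map_mul, map_mul, map_mul, map_inv, map_inv,
        FreeGroup.lift_apply_of, FreeGroup.lift_apply_of, ← map_inv, ← map_inv, ← map_mul, ← map_mul,
        ← map_mul, ← commutatorElement_def, gpGen_comm hadj', map_one]
  let ι' : GP X (Γ.induce X) (fun v => o v) →* GP V Γ o ⧸ N :=
    PresentedGroup.toGroup hrels
  -- Step 3: ι' ∘ R = π
  have hcomp : ι'.comp R = π := by
    apply PresentedGroup.ext
    intro z
    show ι' (R (gpGen z)) = π (gpGen z)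
    by_cases hz : z ∈ X
    · rw [hR1 ⟨z, hz⟩]
      exact PresentedGroup.toGroup.of hrels
    · rw [hR2 z hz, map_one]
      symm
      rw [QuotientGroup.mk'_apply, QuotientGroup.eq_one_iff]
      exact Subgroup.subset_normalClosure ⟨z, hz, rfl⟩
  -- Step 4: conclude
  intro x hx
  have hxN : x ∈ N := by
    have : π x = 1 := by
      rw [← hcomp]
      simp [hx]
    rwa [QuotientGroup.mk'_apply, QuotientGroup.eq_one_iff] at this
  -- N ≤ ker (R ∘ ψ)
  have hker : N ≤ (R.comp ψ.toMonoidHom).ker := by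
    apply Subgroup.normalClosure_le_normal
    rintro _ ⟨z, hz, rfl⟩
    exact hstep1 z hz
  exact hker hxN
end

section
/- For n ≥ 2, the free group Fₙ has an Aut-undistorted element: there exist x ∈ Fₙ and C > 0 such that the word norm of xᵏ with respect to the set of primitive elements of Fₙ exceeds C·k for all k ≥ 1, given the existence of a non-zero homogeneous quasimorphism on Fₙ bounded on the set of primitive elements. -/
/-- The set of primitive elements of the free group `Fₙ`: the `Aut(Fₙ)`-orbit of a
basis element. -/
def primitives (n : ℕ) : Set (FreeGroup (Fin n)) :=
  {x | ∃ (ψ : MulAut (FreeGroup (Fin n))) (i : Fin n), ψ (FreeGroup.of i) = x}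

/-- The automorphism of the free group inverting every generator. -/
noncomputable def invAut (n : ℕ) : MulAut (FreeGroup (Fin n)) :=
  MonoidHom.toMulEquiv
    (FreeGroup.lift fun i => (FreeGroup.of i)⁻¹)
    (FreeGroup.lift fun i => (FreeGroup.of i)⁻¹)
    (by ext i; simp) (by ext i; simp)

lemma invAut_of (n : ℕ) (i : Fin n) :
    invAut n (FreeGroup.of i) = (FreeGroup.of i)⁻¹ := by
  simp [invAut]

lemma primitives_inv (n : ℕ) {s : FreeGroup (Fin n)} (hs : s ∈ primitives n) :
    s⁻¹ ∈ primitives n := by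
  obtain ⟨ψ, i, rfl⟩ := hs
  exact ⟨(invAut n).trans ψ, i, by simp [MulEquiv.trans_apply, invAut_of]⟩

lemma primitives_of (n : ℕ) (i : Fin n) : FreeGroup.of i ∈ primitives n :=
  ⟨MulEquiv.refl _, i, rfl⟩

lemma submonoid_closure_primitives (n : ℕ) :
    Submonoid.closure (primitives n) = ⊤ := by
  have hinv : (primitives n)⁻¹ = primitives n := by
    ext s
    constructor
    · intro hs
      simpa using primitives_inv n hs
    · intro hs
      exact Set.mem_inv.mpr (primitives_inv n hs)
  have h1 : Subgroup.closure (primitives n) = ⊤ := by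
    rw [eq_top_iff, ← FreeGroup.closure_range_of (Fin n)]
    apply Subgroup.closure_mono
    rintro _ ⟨i, rfl⟩
    exact primitives_of n i
  have h2 := Subgroup.closure_toSubmonoid (primitives n)
  rw [hinv, Set.union_self, h1] at h2
  rw [← h2]
  rfl

lemma exists_list (n : ℕ) (x : FreeGroup (Fin n)) :
    ∃ l : List (FreeGroup (Fin n)), (∀ s ∈ l, s ∈ primitives n) ∧ l.prod = x := by
  have hx : x ∈ Submonoid.closure (primitives n) := by
    rw [submonoid_closure_primitives]; trivial
  exact Submonoid.exists_list_of_mem_closure hx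

theorem stmt19 (n : ℕ) (hn : 2 ≤ n)
    (hqm : ∃ q : FreeGroup (Fin n) → ℝ,
      (∃ D : ℝ, ∀ a b : FreeGroup (Fin n), |q a - q (a * b) + q b| < D) ∧
      (∀ (m : ℤ) (x : FreeGroup (Fin n)), q (x ^ m) = m * q x) ∧
      (∃ B : ℝ, ∀ s ∈ primitives n, |q s| ≤ B) ∧
      (∃ x : FreeGroup (Fin n), q x ≠ 0)) :
    ∃ (x : FreeGroup (Fin n)) (C : ℝ), 0 < C ∧
      ∀ k : ℕ, 1 ≤ k → C * k < (wordNorm (primitives n) (x ^ k) : ℝ) := by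
  obtain ⟨q, ⟨D, hD⟩, hhom, ⟨B, hB⟩, ⟨x, hx⟩⟩ := hqm
  -- q 1 = 0
  have hq1 : q 1 = 0 := by
    have := hhom 0 1
    simpa using this
  have hD0 : 0 < D := by
    have := hD 1 1
    rw [one_mul, hq1] at this
    simpa using this
  have hB0 : 0 ≤ B := by
    have h0 : (0 : ℕ) < n := by omega
    exact le_trans (abs_nonneg _) (hB _ (primitives_of n ⟨0, h0⟩))
  -- subadditivity: |q (a*b)| ≤ |q a| + |q b| + D
  have hsub : ∀ a b : FreeGroup (Fin n), |q (a * b)| ≤ |q a| + |q b| + D := by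
    intro a b
    have h := (hD a b).le
    have key : |q (a * b) - (q a + q b)| = |q a - q (a * b) + q b| := by
      rw [abs_sub_comm]; congr 1; ring
    have h2 : |q (a * b)| - |q a + q b| ≤ |q (a * b) - (q a + q b)| :=
      abs_sub_abs_le_abs_sub _ _
    have h3 : |q a + q b| ≤ |q a| + |q b| := abs_add_le _ _
    rw [key] at h2
    linarith
  -- for any list of primitives, |q l.prod| ≤ l.length * (B + D)
  have hlist : ∀ l : List (FreeGroup (Fin n)), (∀ s ∈ l, s ∈ primitives n) →
      |q l.prod| ≤ l.length * (B + D) := by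
    intro l
    induction l with
    | nil => intro _; simp [hq1]
    | cons a t ih =>
        intro hmem
        have ha : |q a| ≤ B := hB a (hmem a List.mem_cons_self)
        have ht := ih (fun s hs => hmem s (List.mem_cons_of_mem a hs))
        have := hsub a t.prod
        simp only [List.prod_cons, List.length_cons]
        push_cast
        calc |q (a * t.prod)| ≤ |q a| + |q t.prod| + D := hsub a t.prod
          _ ≤ B + t.length * (B + D) + D := by linarith
          _ = (t.length + 1) * (B + D) := by ring
  refine ⟨x, |q x| / (2 * (B + D)), by positivity, ?_⟩
  intro k hk
  -- key bound: k * |q x| ≤ wordNorm * (B + D)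
  have hkey : (k : ℝ) * |q x| ≤ (wordNorm (primitives n) (x ^ k) : ℝ) * (B + D) := by
    have hne : {m | ∃ l : List (FreeGroup (Fin n)),
        (∀ s ∈ l, s ∈ primitives n) ∧ l.length = m ∧ l.prod = x ^ k}.Nonempty := by
      obtain ⟨l, hl, hpl⟩ := exists_list n (x ^ k)
      exact ⟨l.length, l, hl, rfl, hpl⟩
    obtain ⟨l, hl, hlen, hpl⟩ := Nat.sInf_mem hne
    have h1 : |q (x ^ k)| ≤ l.length * (B + D) := by
      rw [← hpl]; exact hlist l hl
    have h2 : q (x ^ k) = (k : ℝ) * q x := by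
      have := hhom (k : ℤ) x
      rw [zpow_natCast] at this
      push_cast at this ⊢
      exact this
    rw [h2, abs_mul, abs_of_nonneg (by positivity : (0:ℝ) ≤ (k:ℝ))] at h1
    rw [wordNorm, ← hlen]
    exact h1
  have hBD : 0 < B + D := by linarith
  have hqx : 0 < |q x| := abs_pos.mpr hx
  have hk1 : (1 : ℝ) ≤ (k : ℝ) := by exact_mod_cast hk
  have hpos : 0 < (k : ℝ) * |q x| := by positivity
  rw [div_mul_eq_mul_div, div_lt_iff₀ (by positivity)]
  nlinarith [hkey, hpos]
end
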